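/- arXiv:1502.03776 — 4 statements merged into one kernel-verified Lean document; each statement's English description precedes it below -/
import Mathlib

section
/- For real x → +∞, Γ(x) is asymptotic to x^{x-1/2} e^{-x} √(2π), i.e., the quotient Γ(x) / (x^{x-1/2} e^{-x} √(2π)) tends to 1 as x → +∞ (Stirling's formula). -/
/-!
Write the quotient as `exp (stirlingRemainder x)`. Along the integers, `stirlingRemainder n → 0`
is Stirling's formula for `n!`. For `x = n + t` with `n = ⌊x⌋₊`, log-convexity of `Γ` traps
`log Γ (n + t)` between `log Γ n + t log (n - 1)` and `log Γ n + t log n`, while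
`(x - 1/2) log x - x` moves by `t log n + O(1/n)` (from `u / (1 + u) ≤ log (1 + u) ≤ u`); so the
remainder changes by `O(1/n)` between `n` and `x`.
-/

open Real Filter Topology

noncomputable def stirlingRemainder (x : ℝ) : ℝ :=
  log (Gamma x) - ((x - 1 / 2) * log x - x + log √(2 * π))

lemma exp_stirlingRemainder {x : ℝ} (hx : 0 < x) :
    exp (stirlingRemainder x) = Gamma x / (x ^ (x - 1 / 2) * exp (-x) * √(2 * π)) := by
  rw [stirlingRemainder, exp_sub, exp_log (Gamma_pos_of_pos hx), exp_add, exp_sub,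
    exp_log (by positivity), rpow_def_of_pos hx, mul_comm (log x), exp_neg]
  field_simp

lemma stirlingRemainder_natCast {n : ℕ} (hn : n ≠ 0) :
    stirlingRemainder n = log (Stirling.stirlingSeq n) - log √π := by
  obtain ⟨m, rfl⟩ := Nat.exists_eq_succ_of_ne_zero hn
  have hΓ : Gamma ((m + 1 : ℕ) : ℝ) = m.factorial := by
    rw [Nat.cast_succ, Gamma_nat_eq_factorial]
  rw [stirlingRemainder, Stirling.log_stirlingSeq_formula, hΓ, Nat.factorial_succ, Nat.cast_mul,
    log_mul (by positivity) (by positivity), log_mul (by positivity) (by positivity),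
    log_div (by positivity) (by positivity), log_exp, log_sqrt (by positivity),
    log_sqrt (by positivity), log_mul (by positivity) (by positivity)]
  push_cast
  ring

lemma abs_log_Gamma_add_sub_le {n : ℕ} (hn : 2 ≤ n) {t : ℝ} (ht₀ : 0 ≤ t) (ht₁ : t ≤ 1) :
    |log (Gamma (n + t)) - log (Gamma n) - t * log n| ≤ log n - log (n - 1) := by
  have hfeq : ∀ {y : ℝ}, 0 < y → (log ∘ Gamma) (y + 1) = (log ∘ Gamma) y + log y := fun hy => by
    simp only [Function.comp_apply, Gamma_add_one hy.ne', log_mul hy.ne' (Gamma_pos_of_pos hy).ne',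
      add_comm]
  have hn' : (2 : ℝ) ≤ n := by exact_mod_cast hn
  have hlog : log (n - 1) ≤ log n := log_le_log (by linarith) (by linarith)
  rcases ht₀.eq_or_lt with rfl | ht₀
  · simpa using hlog
  have hle := BohrMollerup.f_add_nat_le (n := n) convexOn_log_Gamma hfeq (by omega) ht₀ ht₁
  have hge := BohrMollerup.f_add_nat_ge convexOn_log_Gamma hfeq hn ht₀
  simp only [Function.comp_apply] at hle hge
  rw [abs_le]
  constructor <;> nlinarith

lemma abs_mul_log_add_sub_log_sub_le {a t : ℝ} (ha : 1 / 2 ≤ a) (ht₀ : 0 ≤ t) (ht₁ : t ≤ 1) :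
    |(a + t - 1 / 2) * (log (a + t) - log a) - t| ≤ 1 / (2 * a) := by
  have ha₀ : 0 < a := by linarith
  have hpos : 0 < (a + t) / a := by positivity
  have hupper : log (a + t) - log a ≤ t / a := by
    have := log_le_sub_one_of_pos hpos
    rw [log_div (by positivity) ha₀.ne'] at this
    have e : (a + t) / a - 1 = t / a := by field_simp; ring
    linarith
  have hlower : t / (a + t) ≤ log (a + t) - log a := by
    have := one_sub_inv_le_log_of_pos hpos
    rw [log_div (by positivity) ha₀.ne'] at this
    have e : 1 - ((a + t) / a)⁻¹ = t / (a + t) := by field_simp; ring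
    linarith
  have hc : 0 ≤ a + t - 1 / 2 := by linarith
  have hu : t / a * a = t := div_mul_cancel₀ t ha₀.ne'
  have hv : t / (a + t) * (a + t) = t := div_mul_cancel₀ t (by positivity)
  have hw : 1 / (2 * a) * (2 * a) = 1 := div_mul_cancel₀ 1 (by positivity)
  rw [abs_le]
  constructor
  · nlinarith [mul_le_mul_of_nonneg_left hlower hc]
  · nlinarith [mul_le_mul_of_nonneg_left hupper hc]

lemma log_sub_log_sub_one_le {x : ℝ} (hx : 2 ≤ x) : log x - log (x - 1) ≤ 2 / x := by
  have hx₁ : 0 < x - 1 := by linarith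
  have h := one_sub_inv_le_log_of_pos (show 0 < (x - 1) / x by positivity)
  rw [log_div hx₁.ne' (by positivity), inv_div] at h
  have e : 1 - x / (x - 1) = -(1 / (x - 1)) := by field_simp; ring
  have h2 : 1 / (x - 1) ≤ 2 / x := by
    rw [div_le_div_iff₀ hx₁ (by positivity)]
    linarith
  linarith

lemma abs_stirlingRemainder_add_sub_le {n : ℕ} (hn : 2 ≤ n) {t : ℝ} (ht₀ : 0 ≤ t) (ht₁ : t ≤ 1) :
    |stirlingRemainder (n + t) - stirlingRemainder n| ≤ 3 / n := by
  have hn' : (2 : ℝ) ≤ n := by exact_mod_cast hn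
  have hΓ := abs_log_Gamma_add_sub_le hn ht₀ ht₁
  have hpow := abs_mul_log_add_sub_log_sub_le (a := n) (by linarith) ht₀ ht₁
  have hlog := log_sub_log_sub_one_le hn'
  have e : stirlingRemainder (n + t) - stirlingRemainder n =
      (log (Gamma (n + t)) - log (Gamma n) - t * log n) -
        ((n + t - 1 / 2) * (log (n + t) - log n) - t) := by
    unfold stirlingRemainder
    ring
  have hhalf : 1 / (2 * (n : ℝ)) ≤ 1 / n := by gcongr; linarith
  rw [e]
  calc _ ≤ _ := abs_sub _ _
    _ ≤ 2 / (n : ℝ) + 1 / n := add_le_add (hΓ.trans hlog) (hpow.trans hhalf)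
    _ = 3 / n := by ring

lemma tendsto_stirlingRemainder_natCast :
    Tendsto (fun n : ℕ => stirlingRemainder n) atTop (𝓝 0) := by
  have h := ((continuousAt_log (by positivity : √π ≠ 0)).tendsto.comp
    Stirling.tendsto_stirlingSeq_sqrt_pi).sub_const (log √π)
  rw [sub_self] at h
  refine h.congr' ?_
  filter_upwards [eventually_ne_atTop 0] with n hn using (stirlingRemainder_natCast hn).symm

lemma tendsto_stirlingRemainder : Tendsto stirlingRemainder atTop (𝓝 0) := by
  have hfloor := tendsto_stirlingRemainder_natCast.comp (tendsto_nat_floor_atTop (α := ℝ))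
  have hdiff :
      Tendsto (fun x : ℝ => stirlingRemainder x - stirlingRemainder ⌊x⌋₊) atTop (𝓝 0) := by
    refine squeeze_zero_norm' ?_
      ((tendsto_const_div_atTop_nhds_zero_nat (3 : ℝ)).comp tendsto_nat_floor_atTop)
    filter_upwards [eventually_ge_atTop 2] with x hx
    have hn : 2 ≤ ⌊x⌋₊ := Nat.le_floor (by exact_mod_cast hx)
    have h := abs_stirlingRemainder_add_sub_le hn (sub_nonneg.2 (Nat.floor_le (by linarith)))
      (by linarith [Nat.lt_floor_add_one x])
    rwa [add_sub_cancel] at h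
  simpa using hfloor.add hdiff

/-- Stirling's formula: Γ(x) ~ x^{x-1/2} e^{-x} √(2π) as x → +∞. -/
theorem gamma_stirling :
    Filter.Tendsto
      (fun x : ℝ => Real.Gamma x / (x ^ (x - 1/2) * Real.exp (-x) * Real.sqrt (2 * Real.pi)))
      Filter.atTop (nhds 1) := by
  have h := (continuous_exp.tendsto 0).comp tendsto_stirlingRemainder
  rw [exp_zero] at h
  refine h.congr' ?_
  filter_upwards [eventually_gt_atTop 0] with x hx using exp_stirlingRemainder hx
end

section
/- Let I = (-1,1), α > -1, and P a polynomial of degree at most p with p ≥ 1. Then there exists a constant C depending only on α (and not on p or P) such that ∫_I P'(x)² (1-x²)^{α+1} dx ≤ C p² ∫_I P(x)² (1-x²)^α dx. -/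
/-!
The Jacobi operator `L f = (x² - 1) f'' + 2 (α + 1) x f'` satisfies
`∫ f' g' (1 - x²)^(α+1) = ∫ (L f) g (1 - x²)^α` (integration by parts), so it is symmetric
for the weighted inner product `⟨f, g⟩ = ∫ f g (1 - x²)^α`, and the left-hand side of the
inequality is `⟨L P, P⟩`. On polynomials of degree `≤ p` the operator `L` is triangular in the
monomial basis with diagonal entries `n (n + 2α + 1) ≤ (1 + |2α + 1|) p²`; these are its
eigenvalues, and the spectral theorem for `L` gives `⟨L P, P⟩ ≤ (1 + |2α + 1|) p² ⟨P, P⟩`.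
-/

open MeasureTheory Polynomial Set

lemma one_sub_sq_pos {x : ℝ} (hx : x ∈ Ioo (-1 : ℝ) 1) : 0 < 1 - x ^ 2 := by
  nlinarith [hx.1, hx.2]

lemma intervalIntegrable_one_sub_sq_rpow {β : ℝ} (hβ : -1 < β) :
    IntervalIntegrable (fun x : ℝ => (1 - x ^ 2) ^ β) volume (-1) 1 := by
  -- On `[0, 1]` the weight is `(1 - x) ^ β` times the continuous factor `(1 + x) ^ β`;
  -- the weight is even, which handles `[-1, 0]`.
  have hright : IntervalIntegrable (fun x : ℝ => (1 - x ^ 2) ^ β) volume 0 1 := by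
    have h := (intervalIntegral.intervalIntegrable_rpow' (a := 0) (b := 1) hβ).comp_sub_left 1
    rw [sub_zero, sub_self] at h
    refine (h.symm.mul_continuousOn (g := fun x : ℝ => (1 + x) ^ β) ?_).congr_uIoo fun x hx => ?_
    · rw [uIcc_of_le zero_le_one]
      exact (continuousOn_const.add continuousOn_id).rpow_const fun x hx =>
        Or.inl (by dsimp; linarith [hx.1])
    · rw [uIoo_of_le zero_le_one] at hx
      dsimp only
      rw [← Real.mul_rpow (by linarith [hx.2]) (by linarith [hx.1])]
      ring_nf
  have hleft : IntervalIntegrable (fun x : ℝ => (1 - x ^ 2) ^ β) volume (-1) 0 := by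
    simpa using (IntervalIntegrable.iff_comp_neg).mp hright.symm
  exact hleft.trans hright

open Module.End in
lemma InnerProductSpace.Core.inner_map_self_le {E : Type*} [AddCommGroup E] [Module ℝ E]
    [FiniteDimensional ℝ E] (c : InnerProductSpace.Core ℝ E) {T : E →ₗ[ℝ] E}
    (hT : ∀ u v, c.inner (T u) v = c.inner u (T v)) {b : ℝ}
    (hb : ∀ μ, HasEigenvalue T μ → μ ≤ b) (v : E) :
    c.inner (T v) v ≤ b * c.inner v v := by
  let _ : NormedAddCommGroup E := c.toNormedAddCommGroup
  let _ : InnerProductSpace ℝ E := InnerProductSpace.ofCore c.toCore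
  have hTs : T.IsSymmetric := hT
  let e := hTs.eigenvectorBasis rfl
  have hexpand : ∀ w, inner ℝ (T v) w =
      ∑ i, hTs.eigenvalues rfl i * (inner ℝ v (e i) * inner ℝ (e i) w) := by
    intro w
    rw [← e.sum_inner_mul_inner]
    refine Finset.sum_congr rfl fun i _ => ?_
    rw [hTs, hTs.apply_eigenvectorBasis, inner_smul_right]
    simp only [e, Real.ringHom_apply, mul_assoc]
  change inner ℝ (T v) v ≤ b * inner ℝ v v
  rw [hexpand, ← e.sum_inner_mul_inner, Finset.mul_sum]
  refine Finset.sum_le_sum fun i _ => mul_le_mul_of_nonneg_right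
    (hb _ (hTs.hasEigenvalue_eigenvalues rfl i)) ?_
  rw [real_inner_comm]
  exact mul_self_nonneg _

namespace Polynomial

lemma coeff_X_mul_derivative (f : ℝ[X]) (n : ℕ) :
    (X * derivative f).coeff n = n * f.coeff n := by
  cases n with
  | zero => simp
  | succ n => rw [coeff_X_mul, coeff_derivative]; push_cast; ring

noncomputable def jacobiOp (α : ℝ) : ℝ[X] →ₗ[ℝ] ℝ[X] where
  toFun f := (X ^ 2 - 1) * derivative (derivative f) + C (2 * (α + 1)) * X * derivative f
  map_add' f g := by simp only [map_add]; ring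
  map_smul' c f := by simp only [map_smul, RingHom.id_apply, smul_add, mul_smul_comm]

lemma jacobiOp_apply (α : ℝ) (f : ℝ[X]) :
    jacobiOp α f =
      (X ^ 2 - 1) * derivative (derivative f) + C (2 * (α + 1)) * X * derivative f :=
  rfl

lemma coeff_jacobiOp (α : ℝ) (f : ℝ[X]) (n : ℕ) :
    (jacobiOp α f).coeff n =
      n * (n + 2 * α + 1) * f.coeff n - (n + 1) * (n + 2) * f.coeff (n + 2) := by
  have hX2 : (X ^ 2 * derivative (derivative f)).coeff n = n * (n - 1) * f.coeff n := by
    have hEuler : X ^ 2 * derivative (derivative f) =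
        X * derivative (X * derivative f) - X * derivative f := by
      simp only [derivative_mul, derivative_X]; ring
    rw [hEuler, coeff_sub, coeff_X_mul_derivative, coeff_X_mul_derivative]
    ring
  rw [jacobiOp_apply, coeff_add, sub_mul, coeff_sub, hX2, one_mul, coeff_derivative,
    coeff_derivative, mul_assoc (C _), coeff_C_mul, coeff_X_mul_derivative]
  push_cast
  ring

lemma jacobiOp_mem_degreeLT (α : ℝ) {n : ℕ} {f : ℝ[X]} (hf : f ∈ degreeLT ℝ n) :
    jacobiOp α f ∈ degreeLT ℝ n := by
  rw [mem_degreeLT, degree_lt_iff_coeff_zero] at hf ⊢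
  intro m hm
  rw [coeff_jacobiOp, hf m hm, hf (m + 2) (by omega)]
  ring

lemma eq_of_jacobiOp_eq_smul {α μ : ℝ} {q : ℝ[X]} (hq : q ≠ 0) (h : jacobiOp α q = μ • q) :
    μ = q.natDegree * (q.natDegree + 2 * α + 1) := by
  have hcoeff := congrArg (coeff · q.natDegree) h
  simp only [coeff_jacobiOp, coeff_smul, smul_eq_mul,
    coeff_eq_zero_of_natDegree_lt (by omega : q.natDegree < q.natDegree + 2), mul_zero,
    sub_zero, coeff_natDegree] at hcoeff
  exact (mul_right_cancel₀ (leadingCoeff_ne_zero.mpr hq) hcoeff).symm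

lemma intervalIntegrable_eval_mul_one_sub_sq_rpow (R : ℝ[X]) {β : ℝ} (hβ : -1 < β) :
    IntervalIntegrable (fun x => R.eval x * (1 - x ^ 2) ^ β) volume (-1) 1 :=
  (intervalIntegrable_one_sub_sq_rpow hβ).continuousOn_mul R.continuousOn

lemma integrableOn_eval_mul_one_sub_sq_rpow (R : ℝ[X]) {β : ℝ} (hβ : -1 < β) :
    IntegrableOn (fun x => R.eval x * (1 - x ^ 2) ^ β) (Ioo (-1) 1) :=
  (intervalIntegrable_iff_integrableOn_Ioo_of_le (by norm_num)).mp
    (intervalIntegrable_eval_mul_one_sub_sq_rpow R hβ)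

noncomputable def jacobiInner (α : ℝ) (f g : ℝ[X]) : ℝ :=
  ∫ x in Ioo (-1) 1, f.eval x * g.eval x * (1 - x ^ 2) ^ α

lemma jacobiInner_comm (α : ℝ) (f g : ℝ[X]) : jacobiInner α f g = jacobiInner α g f := by
  simp only [jacobiInner, mul_comm (f.eval _)]

lemma jacobiInner_add_left {α : ℝ} (hα : -1 < α) (f₁ f₂ g : ℝ[X]) :
    jacobiInner α (f₁ + f₂) g = jacobiInner α f₁ g + jacobiInner α f₂ g := by
  have h₁ := integrableOn_eval_mul_one_sub_sq_rpow (f₁ * g) hα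
  have h₂ := integrableOn_eval_mul_one_sub_sq_rpow (f₂ * g) hα
  simp only [eval_mul] at h₁ h₂
  simp only [jacobiInner, ← integral_add h₁ h₂, eval_add, add_mul]

lemma jacobiInner_smul_left (α r : ℝ) (f g : ℝ[X]) :
    jacobiInner α (r • f) g = r * jacobiInner α f g := by
  simp only [jacobiInner, ← integral_const_mul, eval_smul, smul_eq_mul, mul_assoc]

lemma eval_mul_self_mul_one_sub_sq_rpow_nonneg (α : ℝ) (f : ℝ[X]) {x : ℝ}
    (hx : x ∈ Ioo (-1 : ℝ) 1) : 0 ≤ f.eval x * f.eval x * (1 - x ^ 2) ^ α :=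
  mul_nonneg (mul_self_nonneg _) (Real.rpow_nonneg (one_sub_sq_pos hx).le _)

lemma jacobiInner_self_nonneg (α : ℝ) (f : ℝ[X]) : 0 ≤ jacobiInner α f f :=
  setIntegral_nonneg measurableSet_Ioo fun _ hx =>
    eval_mul_self_mul_one_sub_sq_rpow_nonneg α f hx

lemma eq_zero_of_jacobiInner_self_eq_zero {α : ℝ} (hα : -1 < α) {f : ℝ[X]}
    (h : jacobiInner α f f = 0) : f = 0 := by
  have hint := integrableOn_eval_mul_one_sub_sq_rpow (f * f) hα
  simp only [eval_mul] at hint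
  have hae := (setIntegral_eq_zero_iff_of_nonneg_ae
    (ae_restrict_of_forall_mem measurableSet_Ioo fun _ hx =>
      eval_mul_self_mul_one_sub_sq_rpow_nonneg α f hx) hint).mp h
  have hcont : ContinuousOn (fun x => f.eval x * f.eval x * (1 - x ^ 2) ^ α) (Ioo (-1) 1) :=
    (f.continuousOn.mul f.continuousOn).mul <|
      (by fun_prop : ContinuousOn (fun x : ℝ => 1 - x ^ 2) _).rpow_const
        fun _ hx => Or.inl (one_sub_sq_pos hx).ne'
  have hzero := Measure.eqOn_open_of_ae_eq hae isOpen_Ioo hcont continuousOn_const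
  refine f.eq_zero_of_infinite_isRoot <|
    (Ioo_infinite (by norm_num : (-1 : ℝ) < 1)).mono fun x hx => ?_
  simpa [(Real.rpow_pos_of_pos (one_sub_sq_pos hx) α).ne'] using hzero hx

lemma hasDerivAt_one_sub_sq_rpow_add_one (α : ℝ) {x : ℝ} (hx : x ∈ Ioo (-1 : ℝ) 1) :
    HasDerivAt (fun y : ℝ => (1 - y ^ 2) ^ (α + 1))
      (-(2 * (α + 1) * x * (1 - x ^ 2) ^ α)) x := by
  convert ((hasDerivAt_pow 2 x).const_sub 1).rpow_const (p := α + 1)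
    (Or.inl (one_sub_sq_pos hx).ne') using 1
  rw [add_sub_cancel_right]
  push_cast
  ring

/-- The boundary terms of the integration by parts vanish because `(1 - x ^ 2) ^ (α + 1)`
vanishes at `±1`. -/
lemma integral_derivative_mul_derivative_eq_jacobiInner {α : ℝ} (hα : -1 < α) (f g : ℝ[X]) :
    ∫ x in Ioo (-1) 1, (derivative f).eval x * (derivative g).eval x * (1 - x ^ 2) ^ (α + 1) =
      jacobiInner α (jacobiOp α f) g := by
  set F : ℝ → ℝ := fun x => g.eval x * ((derivative f).eval x * (1 - x ^ 2) ^ (α + 1))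
  have hderiv : ∀ x ∈ Ioo (-1 : ℝ) 1, HasDerivAt F
      ((derivative f).eval x * (derivative g).eval x * (1 - x ^ 2) ^ (α + 1) -
        (jacobiOp α f).eval x * g.eval x * (1 - x ^ 2) ^ α) x := by
    intro x hx
    refine ((g.hasDerivAt x).mul ((derivative f).hasDerivAt x |>.mul
      (hasDerivAt_one_sub_sq_rpow_add_one α hx))).congr_deriv ?_
    simp only [Pi.mul_apply, jacobiOp_apply, eval_add, eval_mul, eval_sub, eval_pow, eval_X,
      eval_one, eval_C]
    rw [Real.rpow_add (one_sub_sq_pos hx), Real.rpow_one]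
    ring
  have hcont : ContinuousOn F (Icc (-1) 1) :=
    g.continuousOn.mul <| (derivative f).continuousOn.mul <|
      (by fun_prop : ContinuousOn (fun x : ℝ => 1 - x ^ 2) _).rpow_const
        fun _ _ => Or.inr (by linarith)
  have hint₁ := intervalIntegrable_eval_mul_one_sub_sq_rpow (derivative f * derivative g)
    (by linarith : -1 < α + 1)
  have hint₂ := intervalIntegrable_eval_mul_one_sub_sq_rpow (jacobiOp α f * g) hα
  simp only [eval_mul] at hint₁ hint₂
  have hftc := intervalIntegral.integral_eq_sub_of_hasDerivAt_of_le (by norm_num) hcont hderiv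
    (hint₁.sub hint₂)
  have hα₁ : α + 1 ≠ 0 := by linarith
  simp only [F, intervalIntegral.integral_sub hint₁ hint₂, intervalIntegral.integral_of_le
    (by norm_num : (-1 : ℝ) ≤ 1), integral_Ioc_eq_integral_Ioo] at hftc
  norm_num [Real.zero_rpow hα₁] at hftc
  rw [jacobiInner]
  linarith

lemma jacobiInner_jacobiOp_comm {α : ℝ} (hα : -1 < α) (f g : ℝ[X]) :
    jacobiInner α (jacobiOp α f) g = jacobiInner α f (jacobiOp α g) := by
  rw [← integral_derivative_mul_derivative_eq_jacobiInner hα, jacobiInner_comm,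
    ← integral_derivative_mul_derivative_eq_jacobiInner hα]
  simp only [mul_comm ((derivative f).eval _)]

noncomputable abbrev jacobiCore {α : ℝ} (hα : -1 < α) (n : ℕ) :
    InnerProductSpace.Core ℝ (degreeLT ℝ n) where
  inner u v := jacobiInner α u v
  conj_inner_symm u v := jacobiInner_comm α v u
  re_inner_nonneg u := jacobiInner_self_nonneg α u
  add_left u v w := jacobiInner_add_left hα u v w
  smul_left u v r := jacobiInner_smul_left α r u v
  definite _ h := Subtype.ext (eq_zero_of_jacobiInner_self_eq_zero hα h)

lemma natCast_mul_add_le {n p : ℕ} (hn : n ≤ p) (a : ℝ) :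
    n * (n + a) ≤ (1 + |a|) * p ^ 2 := by
  have hn2 : (n : ℝ) ≤ n ^ 2 := by exact_mod_cast Nat.le_self_pow two_ne_zero n
  calc (n : ℝ) * (n + a) = n ^ 2 + a * n := by ring
    _ ≤ n ^ 2 + |a| * n ^ 2 := add_le_add_right ((mul_le_mul_of_nonneg_right (le_abs_self a)
        n.cast_nonneg).trans (mul_le_mul_of_nonneg_left hn2 (abs_nonneg a))) _
    _ = (1 + |a|) * n ^ 2 := by ring
    _ ≤ (1 + |a|) * p ^ 2 := by gcongr

lemma jacobiInner_jacobiOp_self_le {α : ℝ} (hα : -1 < α) {p : ℕ} {P : ℝ[X]}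
    (hP : P.natDegree ≤ p) :
    jacobiInner α (jacobiOp α P) P ≤ (1 + |2 * α + 1|) * p ^ 2 * jacobiInner α P P := by
  let T := (jacobiOp α).restrict fun _ => jacobiOp_mem_degreeLT α (n := p + 1)
  have hT : ∀ μ, Module.End.HasEigenvalue T μ → μ ≤ (1 + |2 * α + 1|) * p ^ 2 := by
    intro μ hμ
    obtain ⟨q, hq⟩ := hμ.exists_hasEigenvector
    have hq0 : (q : ℝ[X]) ≠ 0 := by simpa using hq.2
    rw [eq_of_jacobiOp_eq_smul hq0 (congrArg Subtype.val hq.apply_eq_smul), add_assoc]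
    have hdeg := q.2
    rw [mem_degreeLT, degree_eq_natDegree hq0, Nat.cast_lt] at hdeg
    exact natCast_mul_add_le (by omega) _
  have hPmem : P ∈ degreeLT ℝ (p + 1) := by
    rw [mem_degreeLT]
    exact degree_le_natDegree.trans_lt (by exact_mod_cast Nat.lt_succ_of_le hP)
  exact (jacobiCore hα (p + 1)).inner_map_self_le
    (fun u v => jacobiInner_jacobiOp_comm hα u v) hT ⟨P, hPmem⟩

end Polynomial

/-- Weighted inverse inequality: ∫ P'² (1-x²)^{α+1} ≤ C p² ∫ P² (1-x²)^α. -/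
theorem inverse_estimate_derivative (α : ℝ) (hα : -1 < α) :
    ∃ C : ℝ, 0 < C ∧ ∀ p : ℕ, 1 ≤ p → ∀ P : Polynomial ℝ, P.natDegree ≤ p →
      (∫ x in Set.Ioo (-1 : ℝ) 1,
          ((Polynomial.derivative P).eval x) ^ 2 * (1 - x^2) ^ (α + 1)) ≤
        C * (p : ℝ) ^ 2 *
          ∫ x in Set.Ioo (-1 : ℝ) 1, (P.eval x) ^ 2 * (1 - x^2) ^ α := by
  refine ⟨1 + |2 * α + 1|, by positivity, fun p _ P hP => ?_⟩
  simp only [sq (eval _ _), integral_derivative_mul_derivative_eq_jacobiInner hα]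
  exact jacobiInner_jacobiOp_self_le hα hP
end

section
/- Let I = (-1,1), β₀ > -1, -1 < β ≤ β₀, and p ≥ 1 a natural number. There exists a polynomial g of degree at most p with g(1) = 0, g(-1) = 1, and (∫_I g(x)² (1-x²)^β dx)^{1/2} ≤ C Γ(β+1) (p+1)^{-(1+β)}, where C = C(β₀) is independent of p and β. -/
open Polynomial Real Set MeasureTheory

/-!
For `x = -cos θ` the polynomial `Q_m(x) = (1 - T_m(-x)) / (1 + x)` equals
`(sin (mθ/2) / sin (θ/2))²`, so on `(-1, 1]` it satisfies `0 ≤ Q_m ≤ m² = Q_m(-1)` and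
`(1 + x) Q_m(x) ≤ 2`. The cutoff `g = (1 - x)/2 · (Q_m / m²)^k` has degree `1 + k (m - 1)`,
`g(1) = 0` and `g(-1) = 1`, and in the variable `t = 1 + x` the factor `(Q_m / m²)^(2k)` of `g²` is
at most `min (1, (δ/t)^(2k))` with `δ = 2/m²`. Hence
`∫ g² (1 - x²)^β ≤ 2^β ∫₀^∞ t^β min (1, (δ/t)^(2k)) dt`, which for `2k ≥ 2 (β + 1)` is of order
`δ^(β+1) / (β + 1)`. Choosing `k ≈ β₀ + 1` and `m ≈ p / k` gives `δ ≲ k² / p²`, and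
`1 / (β + 1) ≲ Γ(β + 1)²` because `(β + 1) Γ(β + 1) = Γ(β + 2)` is at least the minimum of `Γ`
on `(0, ∞)`.
-/

lemma abs_sin_nat_mul_le (n : ℕ) (x : ℝ) : |sin (n * x)| ≤ n * |sin x| := by
  induction n with
  | zero => simp
  | succ n ih =>
    calc |sin ((n + 1 : ℕ) * x)| = |sin (n * x) * cos x + cos (n * x) * sin x| := by
          push_cast; rw [add_mul, one_mul, sin_add]
      _ ≤ |sin (n * x)| * |cos x| + |cos (n * x)| * |sin x| := by
          rw [← abs_mul, ← abs_mul]; exact abs_add_le _ _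
      _ ≤ n * |sin x| * 1 + 1 * |sin x| := by
          gcongr
          exacts [abs_cos_le_one x, abs_cos_le_one _]
      _ = (n + 1 : ℕ) * |sin x| := by push_cast; ring

lemma one_sub_cos_nat_mul_le (n : ℕ) (θ : ℝ) : 1 - cos (n * θ) ≤ n ^ 2 * (1 - cos θ) := by
  have half (y : ℝ) : 1 - cos y = 2 * sin (y / 2) ^ 2 := by
    have := cos_two_mul_eq_one_sub (y / 2)
    rw [mul_div_cancel₀ _ two_ne_zero] at this
    linarith
  have hsin : sin (n * (θ / 2)) ^ 2 ≤ n ^ 2 * sin (θ / 2) ^ 2 := by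
    rw [← sq_abs, ← sq_abs (sin _), ← mul_pow]
    exact pow_le_pow_left₀ (abs_nonneg _) (abs_sin_nat_mul_le n _) 2
  rw [half, half, mul_div_assoc]
  linarith

lemma one_sub_eval_T_real_le (n : ℕ) {y : ℝ} (hy : y ∈ Icc (-1) 1) :
    1 - (Chebyshev.T ℝ n).eval y ≤ n ^ 2 * (1 - y) := by
  rw [← cos_arccos hy.1 hy.2, Chebyshev.T_real_cos]
  exact_mod_cast one_sub_cos_nat_mul_le n (arccos y)

/-- `m` times the Fejér kernel, in the variable `x = -cos θ`. -/
noncomputable def fejerPoly (m : ℕ) : ℝ[X] := (1 - (Chebyshev.T ℝ m).comp (-X)) /ₘ (X + 1)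

lemma X_add_one_mul_fejerPoly (m : ℕ) :
    (X + 1) * fejerPoly m = 1 - (Chebyshev.T ℝ m).comp (-X) := by
  have hroot : IsRoot (1 - (Chebyshev.T ℝ m).comp (-X)) (-1) := by
    simp [Chebyshev.T_eval_one]
  simpa [fejerPoly] using (mul_divByMonic_eq_iff_isRoot (a := (-1 : ℝ))).2 hroot

lemma natDegree_fejerPoly_le (m : ℕ) : (fejerPoly m).natDegree ≤ m - 1 := by
  rw [fejerPoly, ← C_1, natDegree_divByMonic _ (monic_X_add_C 1), natDegree_X_add_C]
  refine Nat.sub_le_sub_right ((natDegree_sub_le _ _).trans (max_le (by simp) ?_)) 1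
  simp [natDegree_comp, Chebyshev.natDegree_T]

lemma fejerPoly_eval_neg_one (m : ℕ) : (fejerPoly m).eval (-1) = (m : ℝ) ^ 2 := by
  have h := congrArg (fun p => (derivative p).eval (-1)) (X_add_one_mul_fejerPoly m)
  simpa [derivative_comp, Chebyshev.derivative_T_eval_one] using h

lemma fejerPoly_eval_mul (m : ℕ) (x : ℝ) :
    (x + 1) * (fejerPoly m).eval x = 1 - (Chebyshev.T ℝ m).eval (-x) := by
  simpa using congrArg (eval x) (X_add_one_mul_fejerPoly m)

lemma fejerPoly_eval_bounds (m : ℕ) {x : ℝ} (hx : x ∈ Ioc (-1) 1) :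
    0 ≤ (fejerPoly m).eval x ∧ (fejerPoly m).eval x ≤ (m : ℝ) ^ 2 ∧
      (x + 1) * (fejerPoly m).eval x ≤ 2 := by
  have hx1 : 0 < x + 1 := by linarith [hx.1]
  have hT := abs_le.1 (Chebyshev.abs_eval_T_real_le_one m (x := -x) (by grind [abs_le]))
  have hQ := fejerPoly_eval_mul m x
  have hle := one_sub_eval_T_real_le m (y := -x) (by grind)
  refine ⟨nonneg_of_mul_nonneg_right (by linarith) hx1, ?_, by linarith⟩
  exact le_of_mul_le_mul_left (by linarith) hx1

noncomputable def cutoffPoly (k m : ℕ) : ℝ[X] :=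
  C (1 / 2) * (1 - X) * (C ((m : ℝ) ^ 2)⁻¹ * fejerPoly m) ^ k

lemma cutoffPoly_eval (k m : ℕ) (x : ℝ) :
    (cutoffPoly k m).eval x = (1 - x) / 2 * ((fejerPoly m).eval x / m ^ 2) ^ k := by
  simp [cutoffPoly, div_eq_inv_mul]

lemma cutoffPoly_eval_one (k m : ℕ) : (cutoffPoly k m).eval 1 = 0 := by
  simp [cutoffPoly_eval]

lemma cutoffPoly_eval_neg_one (k : ℕ) {m : ℕ} (hm : m ≠ 0) : (cutoffPoly k m).eval (-1) = 1 := by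
  simp [cutoffPoly_eval, fejerPoly_eval_neg_one, hm]

lemma natDegree_cutoffPoly_le (k m : ℕ) : (cutoffPoly k m).natDegree ≤ 1 + k * (m - 1) := by
  have h1 : (C (1 / 2 : ℝ) * (1 - X)).natDegree ≤ 1 :=
    natDegree_C_mul_le _ _ |>.trans ((natDegree_sub_le _ _).trans (by simp))
  have h2 : (C ((m : ℝ) ^ 2)⁻¹ * fejerPoly m).natDegree ≤ m - 1 :=
    (natDegree_C_mul_le _ _).trans (natDegree_fejerPoly_le m)
  exact natDegree_mul_le.trans (add_le_add h1 (natDegree_pow_le_of_le k h2))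

noncomputable def cutoffEnvelope (δ β : ℝ) (k : ℕ) (t : ℝ) : ℝ :=
  if t ≤ δ then t ^ β else δ ^ (2 * k) * t ^ (β - 2 * k)

lemma pow_mul_rpow_le_cutoffEnvelope {q t δ β : ℝ} (k : ℕ) (hq : q ∈ Icc 0 1) (ht : 0 < t)
    (hqt : q * t ≤ δ) : q ^ (2 * k) * t ^ β ≤ cutoffEnvelope δ β k t := by
  unfold cutoffEnvelope
  split_ifs
  · exact mul_le_of_le_one_left (by positivity) (pow_le_one₀ hq.1 hq.2)
  · have hq' : q ≤ δ / t := (le_div_iff₀ ht).2 hqt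
    calc q ^ (2 * k) * t ^ β ≤ (δ / t) ^ (2 * k) * t ^ β := by gcongr; exact hq.1
      _ = δ ^ (2 * k) * t ^ (β - 2 * k) := by
        rw [rpow_sub ht, div_pow, ← rpow_natCast t (2 * k)]
        push_cast
        field_simp

lemma sq_eval_cutoffPoly_mul_le {β : ℝ} (hβ : -2 ≤ β) (k m : ℕ) {x : ℝ} (hx : x ∈ Ioo (-1) 1) :
    (cutoffPoly k m).eval x ^ 2 * (1 - x ^ 2) ^ β ≤
      2 ^ β * cutoffEnvelope (2 / m ^ 2) β k (1 + x) := by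
  have h1x : 0 < 1 + x := by linarith [hx.1]
  have h1x' : 0 < 1 - x := by linarith [hx.2]
  obtain ⟨hQ0, hQm, hQ2⟩ := fejerPoly_eval_bounds m (Ioo_subset_Ioc_self hx)
  set q := (fejerPoly m).eval x / m ^ 2
  have hq : q ∈ Icc 0 1 := ⟨by positivity, div_le_one_of_le₀ hQm (by positivity)⟩
  have hqt : q * (1 + x) ≤ 2 / m ^ 2 := by
    rw [div_mul_eq_mul_div, add_comm]
    exact div_le_div_of_nonneg_right (by linarith) (by positivity)
  have hend : ((1 - x) / 2) ^ 2 * (1 - x) ^ β ≤ 2 ^ β := by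
    calc ((1 - x) / 2) ^ 2 * (1 - x) ^ β = (1 - x) ^ (β + 2) / 4 := by
          rw [rpow_add h1x', rpow_two]; ring
      _ ≤ 2 ^ (β + 2) / 4 := by gcongr <;> linarith [hx.1]
      _ = 2 ^ β := by rw [rpow_add two_pos]; norm_num
  calc (cutoffPoly k m).eval x ^ 2 * (1 - x ^ 2) ^ β
      = (((1 - x) / 2) ^ 2 * (1 - x) ^ β) * (q ^ (2 * k) * (1 + x) ^ β) := by
        rw [cutoffPoly_eval, show 1 - x ^ 2 = (1 - x) * (1 + x) by ring,
          mul_rpow h1x'.le h1x.le, pow_mul']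
        ring
    _ ≤ 2 ^ β * cutoffEnvelope (2 / m ^ 2) β k (1 + x) := by
        gcongr
        exact pow_mul_rpow_le_cutoffEnvelope k hq h1x hqt

section Envelope

variable {δ β : ℝ} {k : ℕ}

lemma integrableOn_cutoffEnvelope_Ioc_and_integral_eq (hβ : -1 < β) (hδ : 0 < δ) :
    IntegrableOn (cutoffEnvelope δ β k) (Ioc 0 δ) ∧
      ∫ t in Ioc 0 δ, cutoffEnvelope δ β k t = δ ^ (β + 1) / (β + 1) := by
  have heq : EqOn (cutoffEnvelope δ β k) (fun t => t ^ β) (Ioc 0 δ) :=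
    fun t ht => if_pos ht.2
  have hint : IntegrableOn (fun t : ℝ => t ^ β) (Ioc 0 δ) :=
    (intervalIntegrable_iff_integrableOn_Ioc_of_le hδ.le).1
      (intervalIntegral.intervalIntegrable_rpow' hβ)
  refine ⟨hint.congr_fun heq.symm measurableSet_Ioc, ?_⟩
  rw [setIntegral_congr_fun measurableSet_Ioc heq, ← intervalIntegral.integral_of_le hδ.le,
    integral_rpow (Or.inl hβ), zero_rpow (by linarith), sub_zero]

lemma integrableOn_cutoffEnvelope_Ioi_and_integral_eq (hβk : β + 1 < 2 * k) (hδ : 0 < δ) :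
    IntegrableOn (cutoffEnvelope δ β k) (Ioi δ) ∧
      ∫ t in Ioi δ, cutoffEnvelope δ β k t = δ ^ (β + 1) / (2 * k - β - 1) := by
  have heq : EqOn (cutoffEnvelope δ β k) (fun t => δ ^ (2 * k) * t ^ (β - 2 * k)) (Ioi δ) :=
    fun t ht => if_neg (not_le.2 ht)
  have hlt : β - 2 * k < -1 := by linarith
  refine ⟨IntegrableOn.congr_fun ((integrableOn_Ioi_rpow_of_lt hlt hδ).const_mul _) heq.symm
    measurableSet_Ioi, ?_⟩
  rw [setIntegral_congr_fun measurableSet_Ioi heq, integral_const_mul,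
    integral_Ioi_rpow_of_lt hlt hδ, ← rpow_natCast, mul_div_assoc', mul_neg, ← rpow_add hδ,
    neg_div, ← div_neg]
  push_cast
  ring_nf

lemma integrableOn_cutoffEnvelope_Ioi_zero_and_integral_eq (hβ : -1 < β) (hβk : β + 1 < 2 * k)
    (hδ : 0 < δ) :
    IntegrableOn (cutoffEnvelope δ β k) (Ioi 0) ∧
      ∫ t in Ioi 0, cutoffEnvelope δ β k t = δ ^ (β + 1) * (1 / (β + 1) + 1 / (2 * k - β - 1)) := by
  obtain ⟨hint₁, hval₁⟩ := integrableOn_cutoffEnvelope_Ioc_and_integral_eq (k := k) hβ hδ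
  obtain ⟨hint₂, hval₂⟩ := integrableOn_cutoffEnvelope_Ioi_and_integral_eq hβk hδ
  rw [← Ioc_union_Ioi_eq_Ioi hδ.le]
  refine ⟨hint₁.union hint₂, ?_⟩
  rw [setIntegral_union (Ioc_disjoint_Ioi le_rfl) measurableSet_Ioi hint₁ hint₂, hval₁, hval₂]
  ring

end Envelope

lemma integrableOn_comp_one_add_Ioo_and_integral_le {F : ℝ → ℝ} (hF : IntegrableOn F (Ioi 0))
    (hF0 : ∀ t ∈ Ioi 0, 0 ≤ F t) :
    IntegrableOn (fun x => F (1 + x)) (Ioo (-1) 1) ∧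
      ∫ x in Ioo (-1) 1, F (1 + x) ≤ ∫ t in Ioi 0, F t := by
  have hI : IntervalIntegrable F volume 0 2 :=
    (intervalIntegrable_iff_integrableOn_Ioc_of_le zero_le_two).2 (hF.mono_set Ioc_subset_Ioi_self)
  have hI' : IntervalIntegrable (fun x => F (1 + x)) volume (-1) 1 := by
    convert hI.comp_add_left 1 <;> norm_num
  refine ⟨((intervalIntegrable_iff_integrableOn_Ioc_of_le (by norm_num)).1 hI').mono_set
    Ioo_subset_Ioc_self, ?_⟩
  rw [← integral_Ioc_eq_integral_Ioo, ← intervalIntegral.integral_of_le (by norm_num),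
    intervalIntegral.integral_comp_add_left, intervalIntegral.integral_of_le (by norm_num)]
  norm_num
  exact setIntegral_mono_set hF (ae_restrict_of_forall_mem measurableSet_Ioi hF0)
    Ioc_subset_Ioi_self.eventuallyLE

lemma integral_cutoffPoly_le {β : ℝ} (hβ : -1 < β) {k m : ℕ} (hβk : β + 1 < 2 * k) (hm : m ≠ 0) :
    ∫ x in Ioo (-1) 1, (cutoffPoly k m).eval x ^ 2 * (1 - x ^ 2) ^ β ≤
      2 ^ β * ((2 / m ^ 2) ^ (β + 1) * (1 / (β + 1) + 1 / (2 * k - β - 1))) := by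
  have hδ : (0 : ℝ) < 2 / m ^ 2 := by positivity
  obtain ⟨henv, hval⟩ := integrableOn_cutoffEnvelope_Ioi_zero_and_integral_eq hβ hβk hδ
  have hnonneg : ∀ t ∈ Ioi (0 : ℝ), 0 ≤ cutoffEnvelope (2 / m ^ 2) β k t := fun t ht => by
    unfold cutoffEnvelope; have : (0 : ℝ) < t := ht; split_ifs <;> positivity
  obtain ⟨hint, hle⟩ := integrableOn_comp_one_add_Ioo_and_integral_le henv hnonneg
  have hf : 0 ≤ᵐ[volume.restrict (Ioo (-1) 1)]
      fun x => (cutoffPoly k m).eval x ^ 2 * (1 - x ^ 2) ^ β := by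
    refine ae_restrict_of_forall_mem measurableSet_Ioo fun x hx => ?_
    have : 0 < 1 - x ^ 2 := by nlinarith [hx.1, hx.2]
    positivity
  calc ∫ x in Ioo (-1) 1, (cutoffPoly k m).eval x ^ 2 * (1 - x ^ 2) ^ β
      ≤ ∫ x in Ioo (-1) 1, 2 ^ β * cutoffEnvelope (2 / m ^ 2) β k (1 + x) :=
        integral_mono_of_nonneg hf (hint.const_mul _) (ae_restrict_of_forall_mem measurableSet_Ioo
          fun x hx => sq_eval_cutoffPoly_mul_le (by linarith) k m hx)
    _ = 2 ^ β * ∫ x in Ioo (-1) 1, cutoffEnvelope (2 / m ^ 2) β k (1 + x) := integral_const_mul _ _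
    _ ≤ 2 ^ β * ∫ t in Ioi 0, cutoffEnvelope (2 / m ^ 2) β k t := by gcongr
    _ = _ := by rw [hval]

lemma exists_pos_le_Gamma : ∃ γ > 0, ∀ s, 0 < s → γ ≤ Gamma s := by
  obtain ⟨x, hx, hmin⟩ := exists_isMinOn_Gamma_Ioi
  exact ⟨Gamma x, Gamma_pos_of_pos (by linarith [hx.1]), fun s hs => hmin hs⟩

lemma exists_cutoff_degree {k p : ℕ} (hk : 1 ≤ k) (hp : 1 ≤ p) :
    ∃ m, m ≠ 0 ∧ 1 + k * (m - 1) ≤ p ∧ (p : ℝ) + 1 ≤ 2 * k * m := by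
  refine ⟨(p - 1) / k + 1, Nat.succ_ne_zero _, ?_, ?_⟩
  · have := Nat.mul_div_le (p - 1) k
    rw [add_tsub_cancel_right]
    omega
  · have := Nat.lt_mul_div_succ (p - 1) (by omega : 0 < k)
    have : p + 1 ≤ 2 * k * ((p - 1) / k + 1) := by rw [mul_assoc]; omega
    exact_mod_cast this

lemma integral_cutoffPoly_bound_le_sq {β γ : ℝ} {k m p : ℕ} (hβ : -1 < β) (hβk : β + 1 ≤ k)
    (hpm : (p : ℝ) + 1 ≤ 2 * k * m) (hγ : 0 < γ) (hΓ : γ ≤ Gamma (β + 2)) :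
    2 ^ β * ((2 / m ^ 2) ^ (β + 1) * (1 / (β + 1) + 1 / (2 * k - β - 1))) ≤
      ((4 * k) ^ (k + 1) / γ * Gamma (β + 1) * ((p : ℝ) + 1) ^ (-(1 + β))) ^ 2 := by
  have hs : 0 < β + 1 := by linarith
  have hk : (1 : ℝ) ≤ k := Nat.one_le_cast.2 (by exact_mod_cast (by linarith : (0 : ℝ) < k))
  have hm : (0 : ℝ) < m := by nlinarith
  have hsum : 1 / (β + 1) + 1 / (2 * k - β - 1) ≤ 2 / (β + 1) := by
    have : 1 / (2 * k - β - 1) ≤ 1 / (β + 1) := one_div_le_one_div_of_le hs (by linarith)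
    rw [show 2 / (β + 1) = 1 / (β + 1) + 1 / (β + 1) by ring]
    gcongr
  have hsq : (2 : ℝ) ^ β * (2 / m ^ 2) ^ (β + 1) * 2 = ((2 / m) ^ (β + 1)) ^ 2 := by
    rw [mul_assoc, mul_comm _ (2 : ℝ), ← mul_assoc, ← rpow_add_one two_ne_zero,
      ← mul_rpow zero_le_two (by positivity), rpow_pow_comm (by positivity)]
    ring_nf
  have hdecay : (2 / m) ^ (β + 1) ≤ (4 * k) ^ k * ((p : ℝ) + 1) ^ (-(1 + β)) := by
    have hle : 2 / m ≤ 4 * k / ((p : ℝ) + 1) := by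
      rw [div_le_div_iff₀ hm (by positivity)]; linarith
    calc (2 / m) ^ (β + 1) ≤ (4 * k / ((p : ℝ) + 1)) ^ (β + 1) := by gcongr
      _ = (4 * k) ^ (β + 1) * ((p : ℝ) + 1) ^ (-(1 + β)) := by
        rw [div_rpow (by positivity) (by positivity), rpow_neg (by positivity), add_comm 1 β,
          div_eq_mul_inv]
      _ ≤ (4 * k) ^ k * ((p : ℝ) + 1) ^ (-(1 + β)) := by
        gcongr
        rw [← rpow_natCast]
        exact rpow_le_rpow_of_exponent_le (by linarith) hβk
  have hGamma : 1 / (β + 1) ≤ (4 * k * Gamma (β + 1) / γ) ^ 2 := by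
    rw [show β + 2 = (β + 1) + 1 by ring, Gamma_add_one hs.ne'] at hΓ
    set a := Gamma (β + 1) / γ
    have ha : 1 ≤ (β + 1) * a := by rw [← mul_div_assoc, one_le_div hγ]; exact hΓ
    rw [div_le_iff₀ hs]
    calc 1 ≤ ((β + 1) * a) ^ 2 := one_le_pow₀ ha
      _ = (β + 1) * a ^ 2 * (β + 1) := by ring
      _ ≤ (4 * k) ^ 2 * a ^ 2 * (β + 1) := by gcongr; nlinarith
      _ = (4 * k * Gamma (β + 1) / γ) ^ 2 * (β + 1) := by ring
  calc (2 : ℝ) ^ β * ((2 / m ^ 2) ^ (β + 1) * (1 / (β + 1) + 1 / (2 * k - β - 1)))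
      ≤ 2 ^ β * ((2 / m ^ 2) ^ (β + 1) * (2 / (β + 1))) := by gcongr
    _ = ((2 / m) ^ (β + 1)) ^ 2 * (1 / (β + 1)) := by rw [← hsq]; ring
    _ ≤ ((4 * k) ^ k * ((p : ℝ) + 1) ^ (-(1 + β))) ^ 2 * (4 * k * Gamma (β + 1) / γ) ^ 2 := by
        gcongr
    _ = ((4 * k) ^ (k + 1) / γ * Gamma (β + 1) * ((p : ℝ) + 1) ^ (-(1 + β))) ^ 2 := by ring

theorem exists_cutoff_polynomial_general (β₀ : ℝ) :
    ∃ C : ℝ, 0 < C ∧ ∀ β : ℝ, -1 < β → β ≤ β₀ → ∀ p : ℕ, 1 ≤ p →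
      ∃ g : Polynomial ℝ, g.natDegree ≤ p ∧ g.eval 1 = 0 ∧ g.eval (-1) = 1 ∧
        Real.sqrt (∫ x in Set.Ioo (-1 : ℝ) 1, (g.eval x) ^ 2 * (1 - x^2) ^ β) ≤
          C * Real.Gamma (β + 1) * ((p : ℝ) + 1) ^ (-(1 + β)) := by
  obtain ⟨γ, hγ, hΓ⟩ := exists_pos_le_Gamma
  set k := ⌈β₀⌉₊ + 1
  have hk : β₀ + 1 ≤ k := by push_cast [k]; linarith [Nat.le_ceil β₀]
  refine ⟨(4 * k) ^ (k + 1) / γ, by positivity, fun β hβ hββ₀ p hp => ?_⟩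
  obtain ⟨m, hm, hdeg, hpm⟩ := exists_cutoff_degree (Nat.le_add_left 1 _) hp
  refine ⟨cutoffPoly k m, (natDegree_cutoffPoly_le k m).trans hdeg, cutoffPoly_eval_one k m,
    cutoffPoly_eval_neg_one k hm, ?_⟩
  have hΓβ := Gamma_pos_of_pos (by linarith : 0 < β + 1)
  rw [sqrt_le_left (by positivity)]
  exact (integral_cutoffPoly_le hβ (by linarith) hm).trans
    (integral_cutoffPoly_bound_le_sq hβ (by linarith) hpm hγ (hΓ _ (by linarith)))

/-- Existence of a polynomial g with g(1)=0, g(-1)=1 and small weighted L² norm. -/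
theorem exists_cutoff_polynomial (β₀ : ℝ) (hβ₀ : -1 < β₀) :
    ∃ C : ℝ, 0 < C ∧ ∀ β : ℝ, -1 < β → β ≤ β₀ → ∀ p : ℕ, 1 ≤ p →
      ∃ g : Polynomial ℝ, g.natDegree ≤ p ∧ g.eval 1 = 0 ∧ g.eval (-1) = 1 ∧
        Real.sqrt (∫ x in Set.Ioo (-1 : ℝ) 1, (g.eval x) ^ 2 * (1 - x^2) ^ β) ≤
          C * Real.Gamma (β + 1) * ((p : ℝ) + 1) ^ (-(1 + β)) :=
  exists_cutoff_polynomial_general β₀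
end

section
/- Let Q = (-1,1)², -1 < β < 0, and u ∈ C^∞(closure of Q) with Jacobi–Fourier expansion u(x,y) = ∑_{i,j≥0} c_{ij} J_i^β(x) J_j^β(y). Then the trace on the edge y = -1 satisfies ‖u(·,-1)‖²_{H^{0,β}(I)} ≤ C_β ‖u‖²_{H^{1,β}(Q)}, where ‖u(·,-1)‖²_{H^{0,β}(I)} = ∫_{-1}^1 u(x,-1)² (1-x²)^β dx and ‖u‖²_{H^{1,β}(Q)} = ∑_{|α|≤1} ∫_Q |∂^α u|² (1-x²)^{β+α₁}(1-y²)^{β+α₂}. -/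
open MeasureTheory Set

lemma weight_meas (a : ℝ) : Measurable fun x : ℝ => (1 - x ^ 2) ^ a :=
  (measurable_const.sub (measurable_id.pow_const 2)).pow measurable_const

lemma weight_pos {x : ℝ} (hx : x ∈ Set.Ioo (-1:ℝ) 1) : 0 < 1 - x ^ 2 := by
  nlinarith [hx.1, hx.2]

lemma weight_nonneg (a : ℝ) {x : ℝ} (hx : x ∈ Set.Ioo (-1:ℝ) 1) : 0 ≤ (1 - x ^ 2) ^ a :=
  Real.rpow_nonneg (weight_pos hx).le a

lemma weight_integrable {a : ℝ} (ha : -1 < a) :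
    IntegrableOn (fun x : ℝ => (1 - x ^ 2) ^ a) (Ioo (-1 : ℝ) 1) := by
  have hmeas : AEStronglyMeasurable (fun x : ℝ => (1 - x ^ 2) ^ a)
      (volume.restrict (Ioo (-1 : ℝ) 1)) :=
    (weight_meas a).aestronglyMeasurable.restrict
  rcases le_or_gt 0 a with h0 | h0
  · apply Measure.integrableOn_of_bounded (M := 1)
    · simp [Real.volume_Ioo]
    · exact (weight_meas a).aestronglyMeasurable
    · filter_upwards [ae_restrict_mem measurableSet_Ioo] with x hx
      have h1 : 0 ≤ 1 - x ^ 2 := by nlinarith [hx.1, hx.2]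
      have h2 : 1 - x ^ 2 ≤ 1 := by nlinarith [hx.1, hx.2]
      rw [Real.norm_eq_abs, abs_of_nonneg (Real.rpow_nonneg h1 a)]
      exact Real.rpow_le_one h1 h2 h0
  · have hplus : IntegrableOn (fun x : ℝ => (x + 1) ^ a) (Ioo (-1 : ℝ) 1) := by
      have h0 : IntervalIntegrable (fun x : ℝ => x ^ a) volume 0 2 :=
        intervalIntegral.intervalIntegrable_rpow' ha
      have h1 := h0.comp_add_right 1
      norm_num at h1
      exact h1.1.mono_set Set.Ioo_subset_Ioc_self
    have hminus : IntegrableOn (fun x : ℝ => (1 - x) ^ a) (Ioo (-1 : ℝ) 1) := by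
      have h0 : IntervalIntegrable (fun x : ℝ => x ^ a) volume 0 2 :=
        intervalIntegral.intervalIntegrable_rpow' ha
      have h1 := (h0.comp_sub_left 1).symm
      norm_num at h1
      exact h1.1.mono_set Set.Ioo_subset_Ioc_self
    apply Integrable.mono' (hplus.add hminus) hmeas
    filter_upwards [ae_restrict_mem measurableSet_Ioo] with x hx
    have hx1 : (0:ℝ) < 1 + x := by linarith [hx.1]
    have hx2 : (0:ℝ) < 1 - x := by linarith [hx.2]
    have hpos : 0 < 1 - x ^ 2 := by nlinarith
    rw [Real.norm_eq_abs, abs_of_nonneg (Real.rpow_nonneg hpos.le a)]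
    simp only [Pi.add_apply]
    rcases le_or_gt 0 x with hx0 | hx0
    · have : (1 - x ^ 2) ^ a ≤ (1 - x) ^ a := by
        apply Real.rpow_le_rpow_of_nonpos hx2 (by nlinarith) h0.le
      have h2 : 0 ≤ (x + 1) ^ a := Real.rpow_nonneg (by linarith) a
      linarith
    · have : (1 - x ^ 2) ^ a ≤ (x + 1) ^ a := by
        apply Real.rpow_le_rpow_of_nonpos (by linarith : (0:ℝ) < x + 1) (by nlinarith) h0.le
      have h2 : 0 ≤ (1 - x) ^ a := Real.rpow_nonneg hx2.le a
      linarith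

/-- A function bounded on `Ioo (-1) 1` times an integrable weight is integrable. -/
lemma bdd_mul_weight {f : ℝ → ℝ} (hm : AEStronglyMeasurable f volume)
    {M a : ℝ} (ha : -1 < a) (hb : ∀ y ∈ Set.Ioo (-1:ℝ) 1, |f y| ≤ M) :
    IntegrableOn (fun y => f y * (1 - y ^ 2) ^ a) (Set.Ioo (-1:ℝ) 1) := by
  apply Integrable.mono' ((weight_integrable ha).const_mul M)
  · exact (hm.mul (weight_meas a).aestronglyMeasurable).restrict
  · filter_upwards [ae_restrict_mem measurableSet_Ioo] with y hy
    rw [Real.norm_eq_abs, abs_mul, abs_of_nonneg (weight_nonneg a hy)]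
    exact mul_le_mul_of_nonneg_right (hb y hy) (weight_nonneg a hy)

/-- rpow with real exponent 2 equals nat pow 2. -/
lemma rpow_two_eq (r : ℝ) : r ^ (2:ℝ) = r ^ 2 := by
  rw [show (2:ℝ) = ((2:ℕ):ℝ) by norm_num, Real.rpow_natCast]

lemma sq_rpow_half {a : ℝ} (ha : 0 ≤ a) : (a ^ ((1:ℝ)/2)) ^ 2 = a := by
  rw [← Real.rpow_natCast (a ^ ((1:ℝ)/2)) 2, ← Real.rpow_mul ha]
  norm_num

/-- Weighted Cauchy–Schwarz step. -/
lemma cs_step {β : ℝ} (h1 : -1 < β) (h2 : β < 0) {f : ℝ → ℝ} (hfc : Continuous f)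
    (hfint : IntegrableOn (fun t => f t ^ 2 * (1 - t ^ 2) ^ (β+1)) (Ioo (-1:ℝ) 1)) :
    (∫ t in Ioo (-1:ℝ) 1, |f t|) ^ 2 ≤
      (∫ t in Ioo (-1:ℝ) 1, f t ^ 2 * (1 - t ^ 2) ^ (β+1)) *
      (∫ t in Ioo (-1:ℝ) 1, (1 - t ^ 2) ^ (-(β+1))) := by
  set Iv : Set ℝ := Ioo (-1:ℝ) 1
  set B := ∫ t in Iv, f t ^ 2 * (1 - t ^ 2) ^ (β+1) with hB
  set K := ∫ t in Iv, (1 - t ^ 2) ^ (-(β+1)) with hK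
  have hB0 : 0 ≤ B := setIntegral_nonneg measurableSet_Ioo fun t ht =>
    mul_nonneg (sq_nonneg _) (weight_nonneg _ ht)
  have hK0 : 0 ≤ K := setIntegral_nonneg measurableSet_Ioo fun t ht => weight_nonneg _ ht
  set φ : ℝ → ℝ := fun t => |f t| * (1 - t ^ 2) ^ ((β+1)/2) with hφ
  set ψ : ℝ → ℝ := fun t => (1 - t ^ 2) ^ (-((β+1)/2)) with hψ
  have hφm : AEStronglyMeasurable φ (volume.restrict Iv) :=
    (hfc.abs.measurable.mul (weight_meas _)).aestronglyMeasurable.restrict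
  have hψm : AEStronglyMeasurable ψ (volume.restrict Iv) :=
    (weight_meas _).aestronglyMeasurable.restrict
  have hφ2 : Integrable (fun t => φ t ^ 2) (volume.restrict Iv) := by
    apply hfint.congr_fun _ measurableSet_Ioo
    intro t ht
    have hp := weight_pos ht
    simp only [hφ, mul_pow, sq_abs]
    rw [← Real.rpow_natCast ((1 - t ^ 2) ^ ((β+1)/2)) 2, ← Real.rpow_mul hp.le]
    norm_num
  have hψ2 : Integrable (fun t => ψ t ^ 2) (volume.restrict Iv) := by
    apply (weight_integrable (by linarith : (-1:ℝ) < -(β+1))).congr_fun _ measurableSet_Ioo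
    intro t ht
    have hp := weight_pos ht
    simp only [hψ]
    rw [← Real.rpow_natCast ((1 - t ^ 2) ^ (-((β+1)/2))) 2, ← Real.rpow_mul hp.le]
    norm_num
  have hconj : Real.HolderConjugate 2 2 := Real.holderConjugate_iff.mpr ⟨one_lt_two, by norm_num⟩
  have hφ0 : 0 ≤ᵐ[volume.restrict Iv] φ := by
    filter_upwards [ae_restrict_mem measurableSet_Ioo] with t ht
    exact mul_nonneg (abs_nonneg _) (weight_nonneg _ ht)
  have hψ0 : 0 ≤ᵐ[volume.restrict Iv] ψ := by
    filter_upwards [ae_restrict_mem measurableSet_Ioo] with t ht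
    exact weight_nonneg _ ht
  have hφmem : MemLp φ (ENNReal.ofReal 2) (volume.restrict Iv) := by
    rw [ENNReal.ofReal_ofNat]
    exact (memLp_two_iff_integrable_sq hφm).mpr hφ2
  have hψmem : MemLp ψ (ENNReal.ofReal 2) (volume.restrict Iv) := by
    rw [ENNReal.ofReal_ofNat]
    exact (memLp_two_iff_integrable_sq hψm).mpr hψ2
  have hH := integral_mul_le_Lp_mul_Lq_of_nonneg hconj hφ0 hψ0 hφmem hψmem
  have habs : ∫ t in Iv, |f t| = ∫ t in Iv, φ t * ψ t := by
    apply setIntegral_congr_fun measurableSet_Ioo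
    intro t ht
    have hp := weight_pos ht
    simp only [hφ, hψ, mul_assoc]
    rw [← Real.rpow_add hp]
    norm_num
  have heφ : (∫ t in Iv, φ t ^ (2:ℝ)) = B := by
    rw [hB]
    apply setIntegral_congr_fun measurableSet_Ioo
    intro t ht
    have hp := weight_pos ht
    show φ t ^ (2:ℝ) = _
    rw [rpow_two_eq]
    simp only [hφ, mul_pow, sq_abs]
    rw [← Real.rpow_natCast ((1 - t ^ 2) ^ ((β+1)/2)) 2, ← Real.rpow_mul hp.le]
    norm_num
  have heψ : (∫ t in Iv, ψ t ^ (2:ℝ)) = K := by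
    rw [hK]
    apply setIntegral_congr_fun measurableSet_Ioo
    intro t ht
    have hp := weight_pos ht
    show ψ t ^ (2:ℝ) = _
    rw [rpow_two_eq]
    simp only [hψ]
    rw [← Real.rpow_natCast ((1 - t ^ 2) ^ (-((β+1)/2))) 2, ← Real.rpow_mul hp.le]
    norm_num
  rw [habs]
  have hend : (B ^ ((1:ℝ)/2) * K ^ ((1:ℝ)/2)) ^ 2 = B * K := by
    rw [mul_pow, sq_rpow_half hB0, sq_rpow_half hK0]
  calc (∫ t in Iv, φ t * ψ t) ^ 2
      ≤ (B ^ ((1:ℝ)/2) * K ^ ((1:ℝ)/2)) ^ 2 := by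
        apply pow_le_pow_left₀
        · exact setIntegral_nonneg measurableSet_Ioo fun t ht =>
            mul_nonneg (mul_nonneg (abs_nonneg _) (weight_nonneg _ ht)) (weight_nonneg _ ht)
        · rw [← heφ, ← heψ]
          exact hH
    _ = B * K := hend

/-- The open reference square Q = (-1,1)². -/
def refSquare : Set (ℝ × ℝ) := Set.Ioo (-1 : ℝ) 1 ×ˢ Set.Ioo (-1 : ℝ) 1

/-- Weighted trace inequality on the edge y = -1 in the Jacobi-weighted space
H^{1,β}(Q), with constant depending only on β ∈ (-1,0). -/
theorem weighted_trace_inequality (β : ℝ) (h1 : -1 < β) (h2 : β < 0) :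
    ∃ C : ℝ, 0 < C ∧ ∀ u : ℝ × ℝ → ℝ, ContDiff ℝ (⊤ : ℕ∞) u →
      (∫ x in Set.Ioo (-1 : ℝ) 1, (u (x, -1)) ^ 2 * (1 - x^2) ^ β) ≤
        C * ((∫ z in refSquare, (u z) ^ 2 * (1 - z.1^2) ^ β * (1 - z.2^2) ^ β) +
          (∫ z in refSquare,
            (deriv (fun t => u (t, z.2)) z.1) ^ 2 * (1 - z.1^2) ^ (β + 1) * (1 - z.2^2) ^ β) +
          (∫ z in refSquare,
            (deriv (fun t => u (z.1, t)) z.2) ^ 2 * (1 - z.1^2) ^ β * (1 - z.2^2) ^ (β + 1))) := by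
  have hβ1 : (-1:ℝ) < β + 1 := by linarith
  set Iv : Set ℝ := Set.Ioo (-1:ℝ) 1 with hIvdef
  set K : ℝ := ∫ t in Iv, (1 - t ^ 2) ^ (-(β+1)) with hKdef
  have hK0 : 0 ≤ K := setIntegral_nonneg measurableSet_Ioo fun t ht => weight_nonneg _ ht
  refine ⟨1 + 2*K, by linarith, ?_⟩
  intro u hu
  have hcont : Continuous u := hu.continuous
  set g : ℝ×ℝ → ℝ := fun z => fderiv ℝ u z (0, 1) with hgdef
  have hgc : Continuous g := (hu.continuous_fderiv (by simp)).clm_apply continuous_const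
  have hder : ∀ x t : ℝ, HasDerivAt (fun s => u (x, s)) (g (x, t)) t := fun x t =>
    (hu.differentiable (by simp) (x, t)).hasFDerivAt.comp_hasDerivAt t
      ((hasDerivAt_const t x).prodMk (hasDerivAt_id t))
  -- bounds on the compact square
  obtain ⟨Mu, hMu⟩ := (isCompact_Icc.prod isCompact_Icc).exists_bound_of_continuousOn
    (hcont.continuousOn : ContinuousOn u (Icc (-1:ℝ) 1 ×ˢ Icc (-1:ℝ) 1))
  obtain ⟨Mg, hMg⟩ := (isCompact_Icc.prod isCompact_Icc).exists_bound_of_continuousOn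
    (hgc.continuousOn : ContinuousOn g (Icc (-1:ℝ) 1 ×ˢ Icc (-1:ℝ) 1))
  set Af : ℝ → ℝ := fun x => ∫ y in Iv, u (x,y) ^ 2 * (1 - y ^ 2) ^ β with hAf
  set Bf : ℝ → ℝ := fun x => ∫ t in Iv, g (x,t) ^ 2 * (1 - t ^ 2) ^ (β+1) with hBf
  set W : ℝ := ∫ y in Iv, (1 - y ^ 2) ^ β with hWdef
  have hW2 : (2:ℝ) ≤ W := by
    have h2' : ∫ y in Iv, (1:ℝ) ≤ W := by
      apply setIntegral_mono_on
        (integrableOn_const (by simp [hIvdef, Real.volume_Ioo]))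
        (weight_integrable h1) measurableSet_Ioo
      intro y hy
      exact Real.one_le_rpow_of_pos_of_le_one_of_nonpos (weight_pos hy)
        (by nlinarith [hy.1, hy.2]) h2.le
    have : ∫ y in Iv, (1:ℝ) = 2 := by
      rw [setIntegral_const]
      simp [hIvdef, Real.volume_Ioo]
      norm_num
    linarith
  have hgx : ∀ x : ℝ, Continuous fun t => g (x, t) :=
    fun x => hgc.comp (continuous_const.prodMk continuous_id)
  have hux : ∀ x : ℝ, Continuous fun t => u (x, t) :=
    fun x => hcont.comp (continuous_const.prodMk continuous_id)
  have hAint : ∀ x ∈ Icc (-1:ℝ) 1,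
      IntegrableOn (fun y => u (x,y) ^ 2 * (1 - y ^ 2) ^ β) Iv := by
    intro x hx
    apply bdd_mul_weight (((hux x).pow 2).aestronglyMeasurable) h1 (M := Mu ^ 2)
    intro y hy
    rw [Pi.pow_apply, abs_pow]
    exact pow_le_pow_left₀ (abs_nonneg _)
      (by simpa [Real.norm_eq_abs] using hMu (x, y) ⟨hx, Ioo_subset_Icc_self hy⟩) 2
  have hBint : ∀ x ∈ Icc (-1:ℝ) 1,
      IntegrableOn (fun t => g (x,t) ^ 2 * (1 - t ^ 2) ^ (β+1)) Iv := by
    intro x hx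
    apply bdd_mul_weight (((hgx x).pow 2).aestronglyMeasurable) hβ1 (M := Mg ^ 2)
    intro t ht
    rw [Pi.pow_apply, abs_pow]
    exact pow_le_pow_left₀ (abs_nonneg _)
      (by simpa [Real.norm_eq_abs] using hMg (x, t) ⟨hx, Ioo_subset_Icc_self ht⟩) 2
  -- the key pointwise-in-x inequality
  have key : ∀ x ∈ Iv, u (x,-1) ^ 2 ≤ Af x + 2*K*Bf x := by
    intro x hx
    have hxI : x ∈ Icc (-1:ℝ) 1 := Ioo_subset_Icc_self hx
    have hA0 : 0 ≤ Af x := setIntegral_nonneg measurableSet_Ioo fun y hy =>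
      mul_nonneg (sq_nonneg _) (weight_nonneg _ hy)
    have hB0 : 0 ≤ Bf x := setIntegral_nonneg measurableSet_Ioo fun t ht =>
      mul_nonneg (sq_nonneg _) (weight_nonneg _ ht)
    have hcs : (∫ t in Iv, |g (x,t)|) ^ 2 ≤ Bf x * K :=
      cs_step h1 h2 (hgx x) (hBint x hxI)
    have hgabs_int : IntegrableOn (fun t => |g (x,t)|) Iv := by
      apply Measure.integrableOn_of_bounded (M := Mg)
      · simp [hIvdef, Real.volume_Ioo]
      · exact (hgx x).abs.aestronglyMeasurable
      · filter_upwards [ae_restrict_mem measurableSet_Ioo] with t ht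
        rw [Real.norm_eq_abs, abs_abs]
        simpa [Real.norm_eq_abs] using hMg (x, t) ⟨hxI, Ioo_subset_Icc_self ht⟩
    have hy' : ∀ y ∈ Iv, u (x,-1) ^ 2 * (1 - y ^ 2) ^ β ≤
        2*(u (x,y) ^ 2 * (1 - y ^ 2) ^ β) + (2*(K*Bf x)) * (1 - y ^ 2) ^ β := by
      intro y hy
      have hdeq : (deriv fun s => u (x, s)) = fun t => g (x, t) :=
        funext fun t => (hder x t).deriv
      have hFTC : ∫ t in (-1:ℝ)..y, g (x,t) = u (x,y) - u (x,-1) := by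
        have h := intervalIntegral.integral_deriv_eq_sub
          (f := fun s => u (x, s)) (a := (-1:ℝ)) (b := y)
          (fun t _ => (hder x t).differentiableAt)
          (by rw [hdeq]; exact ((hgx x).intervalIntegrable _ _))
        rw [hdeq] at h
        exact h
      have hS : |∫ t in (-1:ℝ)..y, g (x,t)| ≤ ∫ t in Iv, |g (x,t)| := by
        refine le_trans (intervalIntegral.abs_integral_le_integral_abs (by linarith [hy.1])) ?_
        rw [intervalIntegral.integral_of_le (by linarith [hy.1] : (-1:ℝ) ≤ y)]
        apply setIntegral_mono_set hgabs_int
          (ae_of_all _ fun t => abs_nonneg _)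
        exact HasSubset.Subset.eventuallyLE fun t ht => ⟨ht.1, lt_of_le_of_lt ht.2 hy.2⟩
      have hsq : (∫ t in (-1:ℝ)..y, g (x,t)) ^ 2 ≤ Bf x * K := by
        calc (∫ t in (-1:ℝ)..y, g (x,t)) ^ 2 = |∫ t in (-1:ℝ)..y, g (x,t)| ^ 2 := (sq_abs _).symm
          _ ≤ (∫ t in Iv, |g (x,t)|) ^ 2 := pow_le_pow_left₀ (abs_nonneg _) hS 2
          _ ≤ Bf x * K := hcs
      have hu2 : u (x,-1) ^ 2 ≤ 2*(u (x,y)) ^ 2 + 2*(K*Bf x) := by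
        have he : u (x,-1) = u (x,y) - ∫ t in (-1:ℝ)..y, g (x,t) := by
          rw [hFTC]; ring
        rw [he]
        nlinarith [hsq, sq_nonneg (u (x,y) + ∫ t in (-1:ℝ)..y, g (x,t))]
      calc u (x,-1) ^ 2 * (1 - y ^ 2) ^ β
          ≤ (2*(u (x,y)) ^ 2 + 2*(K*Bf x)) * (1 - y ^ 2) ^ β :=
            mul_le_mul_of_nonneg_right hu2 (weight_nonneg β hy)
        _ = 2*(u (x,y) ^ 2 * (1 - y ^ 2) ^ β) + (2*(K*Bf x)) * (1 - y ^ 2) ^ β := by ring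
    have hmono := setIntegral_mono_on
      ((weight_integrable h1).const_mul (u (x,-1) ^ 2))
      (((hAint x hxI).const_mul 2).add ((weight_integrable h1).const_mul (2*(K*Bf x))))
      measurableSet_Ioo (fun y hy => by
        simp only [Pi.add_apply]; exact hy' y hy)
    simp only [Pi.add_apply] at hmono
    rw [integral_add ((hAint x hxI).const_mul 2) ((weight_integrable h1).const_mul (2*(K*Bf x)))]
      at hmono
    rw [integral_const_mul, integral_const_mul, integral_const_mul] at hmono
    have hAfx : (∫ y in Iv, u (x,y) ^ 2 * (1 - y ^ 2) ^ β) = Af x := by simp only [hAf]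
    rw [hAfx, ← hWdef] at hmono
    -- hmono : u (x,-1)^2 * W ≤ 2 * Af x + (2*(K*Bf x)) * W
    nlinarith [hmono, mul_nonneg hA0 (by linarith : (0:ℝ) ≤ W - 2),
      mul_nonneg (mul_nonneg hK0 hB0) (by linarith : (0:ℝ) ≤ W)]
  -- product measure setup
  have hprodmeas : (volume.restrict Iv).prod (volume.restrict Iv) =
      (volume : Measure (ℝ×ℝ)).restrict (Iv ×ˢ Iv) := by
    rw [Measure.prod_restrict, Measure.volume_eq_prod]
  have hrs : ∀ f : ℝ×ℝ → ℝ, (∫ z in refSquare, f z) =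
      ∫ z, f z ∂((volume.restrict Iv).prod (volume.restrict Iv)) := by
    intro f
    rw [hprodmeas]
    rfl
  -- integrability of the two product integrands
  have hF1int : Integrable (fun z : ℝ×ℝ => u z ^ 2 * (1 - z.1 ^ 2) ^ β * (1 - z.2 ^ 2) ^ β)
      ((volume.restrict Iv).prod (volume.restrict Iv)) := by
    apply Integrable.mono'
      (((weight_integrable h1).const_mul (Mu ^ 2)).mul_prod (weight_integrable h1))
    · exact (((hcont.measurable.pow_const 2).mul
        ((weight_meas β).comp measurable_fst)).mul
        ((weight_meas β).comp measurable_snd)).aestronglyMeasurable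
    · rw [hprodmeas]
      filter_upwards [ae_restrict_mem (measurableSet_Ioo.prod measurableSet_Ioo)] with z hz
      obtain ⟨hz1, hz2⟩ := hz
      have hb : |u z ^ 2| ≤ Mu ^ 2 := by
        rw [abs_pow]
        exact pow_le_pow_left₀ (abs_nonneg _)
          (by simpa [Real.norm_eq_abs] using
            hMu z ⟨Ioo_subset_Icc_self hz1, Ioo_subset_Icc_self hz2⟩) 2
      rw [Real.norm_eq_abs, abs_mul, abs_mul,
        abs_of_nonneg (weight_nonneg β hz1), abs_of_nonneg (weight_nonneg β hz2)]
      exact mul_le_mul_of_nonneg_right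
        (mul_le_mul_of_nonneg_right hb (weight_nonneg β hz1)) (weight_nonneg β hz2)
  have hF3int : Integrable (fun z : ℝ×ℝ => g z ^ 2 * (1 - z.1 ^ 2) ^ β * (1 - z.2 ^ 2) ^ (β+1))
      ((volume.restrict Iv).prod (volume.restrict Iv)) := by
    apply Integrable.mono'
      (((weight_integrable h1).const_mul (Mg ^ 2)).mul_prod (weight_integrable hβ1))
    · exact (((hgc.measurable.pow_const 2).mul
        ((weight_meas β).comp measurable_fst)).mul
        ((weight_meas (β+1)).comp measurable_snd)).aestronglyMeasurable
    · rw [hprodmeas]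
      filter_upwards [ae_restrict_mem (measurableSet_Ioo.prod measurableSet_Ioo)] with z hz
      obtain ⟨hz1, hz2⟩ := hz
      have hb : |g z ^ 2| ≤ Mg ^ 2 := by
        rw [abs_pow]
        exact pow_le_pow_left₀ (abs_nonneg _)
          (by simpa [Real.norm_eq_abs] using
            hMg z ⟨Ioo_subset_Icc_self hz1, Ioo_subset_Icc_self hz2⟩) 2
      rw [Real.norm_eq_abs, abs_mul, abs_mul,
        abs_of_nonneg (weight_nonneg β hz1), abs_of_nonneg (weight_nonneg (β+1) hz2)]
      exact mul_le_mul_of_nonneg_right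
        (mul_le_mul_of_nonneg_right hb (weight_nonneg β hz1)) (weight_nonneg (β+1) hz2)
  -- rearrangement of the inner integrals
  have hAW : ∀ x : ℝ, (∫ y in Iv, u (x,y) ^ 2 * (1 - x ^ 2) ^ β * (1 - y ^ 2) ^ β)
      = (1 - x ^ 2) ^ β * Af x := by
    intro x
    rw [hAf, ← integral_const_mul]
    exact setIntegral_congr_fun measurableSet_Ioo (fun y hy => by ring)
  have hBW : ∀ x : ℝ, (∫ t in Iv, g (x,t) ^ 2 * (1 - x ^ 2) ^ β * (1 - t ^ 2) ^ (β+1))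
      = (1 - x ^ 2) ^ β * Bf x := by
    intro x
    rw [hBf, ← integral_const_mul]
    exact setIntegral_congr_fun measurableSet_Ioo (fun t ht => by ring)
  -- main comparison in x
  have hLint : IntegrableOn (fun x => u (x,-1) ^ 2 * (1 - x ^ 2) ^ β) Iv := by
    apply bdd_mul_weight
      (((hcont.comp (continuous_id.prodMk continuous_const)).pow 2).aestronglyMeasurable)
      h1 (M := Mu ^ 2)
    intro x hx
    rw [Pi.pow_apply, abs_pow]
    exact pow_le_pow_left₀ (abs_nonneg _)
      (by simpa [Real.norm_eq_abs] using
        hMu (x, -1) ⟨Ioo_subset_Icc_self hx, by constructor <;> norm_num⟩) 2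
  have hRint1 : Integrable
      (fun x => ∫ y in Iv, u (x,y) ^ 2 * (1 - x ^ 2) ^ β * (1 - y ^ 2) ^ β)
      (volume.restrict Iv) := by
    have := hF1int.integral_prod_left
    exact this
  have hRint3 : Integrable
      (fun x => ∫ t in Iv, g (x,t) ^ 2 * (1 - x ^ 2) ^ β * (1 - t ^ 2) ^ (β+1))
      (volume.restrict Iv) := by
    have := hF3int.integral_prod_left
    exact this
  have hstep := setIntegral_mono_on hLint (hRint1.add (hRint3.const_mul (2*K)))
    measurableSet_Ioo (fun x hx => by
      have hc : u (x,-1) ^ 2 * (1 - x ^ 2) ^ β ≤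
          (1 - x ^ 2) ^ β * Af x + 2*K*((1 - x ^ 2) ^ β * Bf x) := by
        have := mul_le_mul_of_nonneg_right (key x hx) (weight_nonneg β hx)
        nlinarith [this]
      calc u (x,-1) ^ 2 * (1 - x ^ 2) ^ β
          ≤ (1 - x ^ 2) ^ β * Af x + 2*K*((1 - x ^ 2) ^ β * Bf x) := hc
        _ = (∫ y in Iv, u (x,y) ^ 2 * (1 - x ^ 2) ^ β * (1 - y ^ 2) ^ β) +
            2*K*(∫ t in Iv, g (x,t) ^ 2 * (1 - x ^ 2) ^ β * (1 - t ^ 2) ^ (β+1)) := by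
            rw [hAW x, hBW x])
  simp only [Pi.add_apply] at hstep
  rw [integral_add hRint1 (hRint3.const_mul (2*K)), integral_const_mul] at hstep
  -- identify the double integrals with the refSquare integrals
  have hT1eq : (∫ z in refSquare, u z ^ 2 * (1 - z.1 ^ 2) ^ β * (1 - z.2 ^ 2) ^ β)
      = ∫ x in Iv, ∫ y in Iv, u (x,y) ^ 2 * (1 - x ^ 2) ^ β * (1 - y ^ 2) ^ β := by
    rw [hrs]
    exact integral_prod _ hF1int
  have hT3eq : (∫ z in refSquare,
        (deriv (fun t => u (z.1, t)) z.2) ^ 2 * (1 - z.1 ^ 2) ^ β * (1 - z.2 ^ 2) ^ (β+1))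
      = ∫ x in Iv, ∫ t in Iv, g (x,t) ^ 2 * (1 - x ^ 2) ^ β * (1 - t ^ 2) ^ (β+1) := by
    have hcongr : ∀ z : ℝ×ℝ,
        (deriv (fun t => u (z.1, t)) z.2) ^ 2 * (1 - z.1 ^ 2) ^ β * (1 - z.2 ^ 2) ^ (β+1)
        = g z ^ 2 * (1 - z.1 ^ 2) ^ β * (1 - z.2 ^ 2) ^ (β+1) := by
      intro z
      rw [(hder z.1 z.2).deriv]
    simp_rw [hcongr]
    rw [hrs]
    exact integral_prod _ hF3int
  -- nonnegativity of the three refSquare integrals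
  have hrsm : MeasurableSet refSquare := measurableSet_Ioo.prod measurableSet_Ioo
  have hT1pos : 0 ≤ ∫ z in refSquare, u z ^ 2 * (1 - z.1 ^ 2) ^ β * (1 - z.2 ^ 2) ^ β :=
    setIntegral_nonneg hrsm fun z hz =>
      mul_nonneg (mul_nonneg (sq_nonneg _) (weight_nonneg β hz.1)) (weight_nonneg β hz.2)
  have hT2pos : 0 ≤ ∫ z in refSquare,
      (deriv (fun t => u (t, z.2)) z.1) ^ 2 * (1 - z.1 ^ 2) ^ (β+1) * (1 - z.2 ^ 2) ^ β :=
    setIntegral_nonneg hrsm fun z hz =>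
      mul_nonneg (mul_nonneg (sq_nonneg _) (weight_nonneg (β+1) hz.1)) (weight_nonneg β hz.2)
  have hT3pos : 0 ≤ ∫ z in refSquare,
      (deriv (fun t => u (z.1, t)) z.2) ^ 2 * (1 - z.1 ^ 2) ^ β * (1 - z.2 ^ 2) ^ (β+1) :=
    setIntegral_nonneg hrsm fun z hz =>
      mul_nonneg (mul_nonneg (sq_nonneg _) (weight_nonneg β hz.1)) (weight_nonneg (β+1) hz.2)
  rw [← hT1eq, ← hT3eq] at hstep
  nlinarith [hstep, hT1pos, hT2pos, hT3pos, mul_nonneg hK0 hT1pos, mul_nonneg hK0 hT2pos,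
    mul_nonneg hK0 hT3pos]
end
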